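/- Let U = A + iB ∈ U(2d,ℂ) be a unitary matrix whose imaginary part B ∈ ℝ^{2d×2d} is invertible, and set P = B⁻¹A. Then the following are equivalent: (i) there exist symmetric matrices P₁, P₂ ∈ ℝ^{d×d} such that P = diag(P₁, P₂) (i.e. the off-diagonal d×d blocks of P vanish); (ii) there exist W ∈ O(2d,ℝ), V₁, V₂ ∈ O(d,ℝ) and diagonal unitary matrices Σ₁, Σ₂ ∈ U(d,ℂ) such that U = W · diag(Σ₁V₁ᵀ, Σ₂V₂ᵀ); (iii) the unitary matrix UᵀU is block-diagonal, i.e. its off-diagonal d×d blocks vanish. -/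

import Mathlib

/-!
Write `U = A + iB`, `P = B⁻¹A` and `S = UᵀU`. From `U Uᴴ = 1` one gets `conj U · Uᵀ = 1`, and
`U = B(P + i)`, `conj U = B(P - i)`; hence `(P - i) S = P + i`, i.e. `(P - i)(S - 1) = 2i`.
So `P` and `S` are Cayley transforms of each other: `P` is symmetric because `S` is, and `P`
commutes with the block projection `diag(1, 0)` iff `S` does, which is (i) ⇔ (iii).

For (ii) ⇔ (iii): for unitary `U` and `D`, `U = W D` with `W` real orthogonal iff `UᵀU = DᵀD`,
because `U Dᴴ` is then a unitary matrix with `(U Dᴴ)ᵀ (U Dᴴ) = 1`, hence real. A symmetric unitary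
`S = X + iY` has commuting real symmetric parts, so one real orthogonal `V` diagonalises both:
`S = V diag(μ) Vᵀ` with `|μ| = 1`, and `S = EᵀE` for `E = diag(√μ) Vᵀ`. Applying this to the two
diagonal blocks of `UᵀU` produces `D = diag(E₁, E₂)`.
-/

open Matrix Complex

namespace Matrix

section ofReal

variable {l m n : Type*}

theorem map_ofReal_mul [Fintype m] (M : Matrix l m ℝ) (N : Matrix m n ℝ) :
    (M * N).map ((↑) : ℝ → ℂ) = M.map ((↑) : ℝ → ℂ) * N.map ((↑) : ℝ → ℂ) :=
  Matrix.map_mul (f := ofRealHom)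

theorem map_ofReal_one [DecidableEq n] : (1 : Matrix n n ℝ).map ((↑) : ℝ → ℂ) = 1 :=
  Matrix.map_one _ ofReal_zero ofReal_one

theorem map_ofReal_eq_zero_iff (M : Matrix m n ℝ) : M.map ((↑) : ℝ → ℂ) = 0 ↔ M = 0 :=
  (map_injective ofReal_injective).eq_iff' (Matrix.map_zero _ ofReal_zero)

theorem conjTranspose_map_ofReal (M : Matrix m n ℝ) :
    (M.map ((↑) : ℝ → ℂ))ᴴ = (M.map ((↑) : ℝ → ℂ))ᵀ := by
  ext; simp

theorem map_ofReal_mem_unitaryGroup [Fintype n] [DecidableEq n] {V : Matrix n n ℝ}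
    (hV : V ∈ orthogonalGroup n ℝ) : V.map ((↑) : ℝ → ℂ) ∈ unitaryGroup n ℂ := by
  rw [mem_unitaryGroup_iff', star_eq_conjTranspose, conjTranspose_map_ofReal, ← transpose_map,
    ← map_ofReal_mul, (mem_orthogonalGroup_iff' _ _).mp hV, map_ofReal_one]

theorem map_re_add_I_smul_map_im (M : Matrix m n ℂ) :
    (M.map re).map ((↑) : ℝ → ℂ) + I • (M.map im).map ((↑) : ℝ → ℂ) = M := by
  ext i j; simpa [mul_comm] using re_add_im (M i j)

theorem map_star_eq_map_re_sub_I_smul_map_im (M : Matrix m n ℂ) :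
    M.map star = (M.map re).map ((↑) : ℝ → ℂ) - I • (M.map im).map ((↑) : ℝ → ℂ) := by
  ext; simp [Complex.ext_iff]

theorem map_star_mul_transpose_of_mem_unitaryGroup [Fintype n] [DecidableEq n]
    {U : Matrix n n ℂ} (hU : U ∈ unitaryGroup n ℂ) : U.map star * Uᵀ = 1 := by
  simpa [star_eq_conjTranspose, conjTranspose, transpose_map] using
    congrArg transpose (mem_unitaryGroup_iff.mp hU)

end ofReal

section Cayley

variable {n K : Type*} [Fintype n] [DecidableEq n]

theorem commute_nonsing_inv_right {R : Type*} [CommRing R] {A B : Matrix n n R}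
    (h : Commute A B) : Commute A B⁻¹ := by
  by_cases hB : IsUnit B
  · obtain ⟨u, rfl⟩ := hB
    rw [← coe_units_inv]
    exact h.units_inv_right
  · rw [nonsing_inv_apply_not_isUnit _ ((isUnit_iff_isUnit_det B).not.mp hB)]
    exact Commute.zero_right A

variable [Field K] {M N : Matrix n n K} {a : K}

theorem eq_smul_nonsing_inv_of_mul_eq_smul_one (ha : a ≠ 0) (h : M * N = a • 1) :
    M = a • N⁻¹ := by
  rw [inv_eq_left_inv (B := a⁻¹ • M) (by rw [smul_mul_assoc, h, inv_smul_smul₀ ha]),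
    smul_inv_smul₀ ha]

theorem eq_smul_nonsing_inv_of_mul_eq_smul_one' (ha : a ≠ 0) (h : M * N = a • 1) :
    N = a • M⁻¹ := by
  rw [inv_eq_right_inv (B := a⁻¹ • N) (by rw [mul_smul_comm, h, inv_smul_smul₀ ha]),
    smul_inv_smul₀ ha]

variable {X S : Matrix n n K} {c : K}

theorem commute_iff_of_sub_smul_one_mul_sub_one_eq (E : Matrix n n K) (ha : a ≠ 0)
    (h : (X - c • 1) * (S - 1) = a • 1) : Commute E X ↔ Commute E S := by
  have hshift (Y : Matrix n n K) (b : K) : Commute E Y ↔ Commute E (Y - b • 1) := by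
    have hb : Commute E (b • 1) := (Commute.one_right E).smul_right b
    exact ⟨fun hY => hY.sub_right hb, fun hY => by simpa using hY.add_right hb⟩
  rw [hshift X c, hshift S 1, one_smul]
  constructor
  · intro hX
    rw [eq_smul_nonsing_inv_of_mul_eq_smul_one' ha h]
    exact (commute_nonsing_inv_right hX).smul_right a
  · intro hS
    rw [eq_smul_nonsing_inv_of_mul_eq_smul_one ha h]
    exact (commute_nonsing_inv_right hS).smul_right a

theorem IsSymm.of_sub_smul_one_mul_sub_one_eq (hS : S.IsSymm) (ha : a ≠ 0)
    (h : (X - c • 1) * (S - 1) = a • 1) : X.IsSymm := by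
  have hinv : (S - 1)⁻¹.IsSymm := by
    rw [IsSymm, transpose_nonsing_inv, (hS.sub isSymm_one).eq]
  rw [← sub_add_cancel X (c • 1), eq_smul_nonsing_inv_of_mul_eq_smul_one ha h]
  exact (hinv.smul a).add (isSymm_one.smul c)

end Cayley

section Blocks

variable {m n : Type*}

theorem commute_fromBlocks_one_zero_iff [Fintype m] [Fintype n] [DecidableEq m] {R : Type*}
    [Semiring R] (M : Matrix (m ⊕ n) (m ⊕ n) R) :
    Commute (fromBlocks 1 0 0 0) M ↔ M.toBlocks₁₂ = 0 ∧ M.toBlocks₂₁ = 0 := by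
  rw [← fromBlocks_toBlocks M, Commute, SemiconjBy, fromBlocks_multiply, fromBlocks_multiply]
  simp [fromBlocks_inj, eq_comm]

theorem exists_isSymm_fromBlocks_iff {α : Type*} [Zero α] {P : Matrix (m ⊕ n) (m ⊕ n) α}
    (hP : P.IsSymm) :
    (∃ P₁ P₂, P₁ᵀ = P₁ ∧ P₂ᵀ = P₂ ∧ P = fromBlocks P₁ 0 0 P₂) ↔
      P.toBlocks₁₂ = 0 ∧ P.toBlocks₂₁ = 0 := by
  constructor
  · rintro ⟨P₁, P₂, -, -, rfl⟩
    simp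
  · rintro ⟨h₁₂, h₂₁⟩
    have hP' : P = fromBlocks P.toBlocks₁₁ 0 0 P.toBlocks₂₂ := by
      rw [← h₁₂, ← h₂₁, fromBlocks_toBlocks]
    rw [hP'] at hP
    obtain ⟨h₁, -, -, h₂⟩ := isSymm_fromBlocks_iff.mp hP
    exact ⟨_, _, h₁, h₂, hP'⟩

theorem transpose_mul_self_fromBlocks_zero [Fintype m] [Fintype n] {α : Type*} [CommRing α]
    (A : Matrix m m α) (D : Matrix n n α) :
    (fromBlocks A 0 0 D)ᵀ * fromBlocks A 0 0 D = fromBlocks (Aᵀ * A) 0 0 (Dᵀ * D) := by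
  rw [fromBlocks_transpose, fromBlocks_multiply]
  simp

theorem fromBlocks_zero_mem_unitaryGroup_iff [Fintype m] [Fintype n] [DecidableEq m]
    [DecidableEq n] {α : Type*} [CommRing α] [StarRing α] {A : Matrix m m α}
    {D : Matrix n n α} :
    fromBlocks A 0 0 D ∈ unitaryGroup (m ⊕ n) α ↔
      A ∈ unitaryGroup m α ∧ D ∈ unitaryGroup n α := by
  simp only [mem_unitaryGroup_iff', star_eq_conjTranspose, fromBlocks_conjTranspose,
    fromBlocks_multiply, ← fromBlocks_one, fromBlocks_inj]
  simp

end Blocks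

section imInvMulRe

variable {m n : Type*} [Fintype m] [Fintype n] [DecidableEq m] [DecidableEq n]

noncomputable def imInvMulRe (U : Matrix n n ℂ) : Matrix n n ℝ :=
  (U.map im)⁻¹ * U.map re

theorem imInvMulRe_sub_I_mul_transpose_mul_self_sub_one {U : Matrix n n ℂ}
    (hU : U ∈ unitaryGroup n ℂ) (hB : IsUnit (U.map im).det) :
    (U.imInvMulRe.map ((↑) : ℝ → ℂ) - I • 1) * (Uᵀ * U - 1) = (2 * I) • 1 := by
  set P := U.imInvMulRe.map ((↑) : ℝ → ℂ)
  set B := (U.map im).map ((↑) : ℝ → ℂ)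
  have hBP : B * P = (U.map re).map ((↑) : ℝ → ℂ) := by
    rw [← map_ofReal_mul, imInvMulRe, mul_nonsing_inv_cancel_left _ _ hB]
  have hU_eq : B * (P + I • 1) = U := by
    rw [mul_add, hBP, mul_smul_comm, mul_one, map_re_add_I_smul_map_im]
  have hUbar_eq : B * (P - I • 1) = U.map star := by
    rw [mul_sub, hBP, mul_smul_comm, mul_one, map_star_eq_map_re_sub_I_smul_map_im]
  have hcancel (Y : Matrix n n ℂ) : (U.map im)⁻¹.map ((↑) : ℝ → ℂ) * (B * Y) = Y := by
    rw [← mul_assoc, ← map_ofReal_mul, nonsing_inv_mul _ hB, map_ofReal_one, one_mul]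
  have hcayley : (P - I • 1) * (Uᵀ * U) = P + I • 1 := by
    calc (P - I • 1) * (Uᵀ * U)
        = (U.map im)⁻¹.map ((↑) : ℝ → ℂ) * (U.map star * Uᵀ * U) := by
          rw [← hUbar_eq, mul_assoc, mul_assoc, hcancel]
      _ = (U.map im)⁻¹.map ((↑) : ℝ → ℂ) * (B * (P + I • 1)) := by
          rw [map_star_mul_transpose_of_mem_unitaryGroup hU, one_mul, hU_eq]
      _ = P + I • 1 := hcancel _
  rw [mul_sub, hcayley, mul_one]
  module

theorem imInvMulRe_isSymm {U : Matrix n n ℂ} (hU : U ∈ unitaryGroup n ℂ)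
    (hB : IsUnit (U.map im).det) : U.imInvMulRe.IsSymm :=
  (isSymm_map_iff ofReal_injective).mp <|
    (isSymm_transpose_mul_self U).of_sub_smul_one_mul_sub_one_eq (by simp)
      (imInvMulRe_sub_I_mul_transpose_mul_self_sub_one hU hB)

theorem imInvMulRe_offDiag_eq_zero_iff {U : Matrix (m ⊕ n) (m ⊕ n) ℂ}
    (hU : U ∈ unitaryGroup (m ⊕ n) ℂ) (hB : IsUnit (U.map im).det) :
    (U.imInvMulRe.toBlocks₁₂ = 0 ∧ U.imInvMulRe.toBlocks₂₁ = 0) ↔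
      (Uᵀ * U).toBlocks₁₂ = 0 ∧ (Uᵀ * U).toBlocks₂₁ = 0 := by
  have hP : (U.imInvMulRe.toBlocks₁₂ = 0 ∧ U.imInvMulRe.toBlocks₂₁ = 0) ↔
      Commute (fromBlocks 1 0 0 0) (U.imInvMulRe.map ((↑) : ℝ → ℂ)) := by
    rw [commute_fromBlocks_one_zero_iff]
    exact and_congr (map_ofReal_eq_zero_iff _).symm (map_ofReal_eq_zero_iff _).symm
  rw [hP, commute_iff_of_sub_smul_one_mul_sub_one_eq _ (by simp)
    (imInvMulRe_sub_I_mul_transpose_mul_self_sub_one hU hB), commute_fromBlocks_one_zero_iff]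

end imInvMulRe

end Matrix

theorem LinearMap.IsSymmetric.exists_orthonormalBasis_eigenvectors_of_commute
    {𝕜 E ι : Type*} [RCLike 𝕜] [NormedAddCommGroup E] [InnerProductSpace 𝕜 E]
    [FiniteDimensional 𝕜 E] [Fintype ι] {A B : E →ₗ[𝕜] E}
    (hA : A.IsSymmetric) (hB : B.IsSymmetric) (hAB : Commute A B)
    (hι : Module.finrank 𝕜 E = Fintype.card ι) :
    ∃ (b : OrthonormalBasis ι 𝕜 E) (a c : ι → 𝕜),
      ∀ i, A (b i) = a i • b i ∧ B (b i) = c i • b i := by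
  classical
  have hInt := directSum_isInternal_of_commute hA hB hAB
  let b₀ := hInt.collectedBasis fun i => (stdOrthonormalBasis 𝕜 _).toBasis
  have hb₀ : Orthonormal 𝕜 b₀ :=
    hInt.collectedBasis_orthonormal (orthogonalFamily_eigenspace_inf_eigenspace hA hB)
      fun i => (stdOrthonormalBasis 𝕜 _).orthonormal
  let _ := FiniteDimensional.fintypeBasisIndex b₀
  let e := Fintype.equivOfCardEq ((Module.finrank_eq_card_basis b₀).symm.trans hι)
  refine ⟨(b₀.reindex e).toOrthonormalBasis (by simpa using hb₀.comp _ e.symm.injective),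
    fun i => (e.symm i).1.2, fun i => (e.symm i).1.1, fun i => ?_⟩
  have hmem := hInt.collectedBasis_mem (fun i => (stdOrthonormalBasis 𝕜 _).toBasis) (e.symm i)
  simp only [Module.Basis.coe_toOrthonormalBasis, Module.Basis.reindex_apply]
  exact ⟨Module.End.mem_eigenspace_iff.mp hmem.1, Module.End.mem_eigenspace_iff.mp hmem.2⟩

namespace Matrix

variable {m n : Type*} [Fintype m] [Fintype n] [DecidableEq m] [DecidableEq n]

theorem IsHermitian.exists_unitary_diagonal_of_commute {𝕜 : Type*} [RCLike 𝕜]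
    {X Y : Matrix n n 𝕜} (hX : X.IsHermitian) (hY : Y.IsHermitian) (hXY : Commute X Y) :
    ∃ V ∈ unitaryGroup n 𝕜, ∃ a b : n → 𝕜,
      X = V * diagonal a * star V ∧ Y = V * diagonal b * star V := by
  obtain ⟨e, a, b, he⟩ :=
    (isSymmetric_toEuclideanLin_iff.mpr hX).exists_orthonormalBasis_eigenvectors_of_commute
      (isSymmetric_toEuclideanLin_iff.mpr hY) (hXY.map (toLpLinAlgEquiv 2)) finrank_euclideanSpace
  set V := (EuclideanSpace.basisFun n 𝕜).toBasis.toMatrix e.toBasis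
  have hV : V ∈ unitaryGroup n 𝕜 :=
    (EuclideanSpace.basisFun n 𝕜).toMatrix_orthonormalBasis_mem_unitary e
  have hV_apply (i j : n) : V i j = e j i := rfl
  have hdiag (M : Matrix n n 𝕜) (c : n → 𝕜) (hc : ∀ j, toEuclideanLin M (e j) = c j • e j) :
      M = V * diagonal c * star V := by
    have hMV : M * V = V * diagonal c := by
      ext i j
      rw [mul_diagonal, Matrix.mul_apply]
      simpa [hV_apply, mulVec, dotProduct, mul_comm] using congr($(hc j) i)
    rw [← hMV, mul_assoc, mem_unitaryGroup_iff.mp hV, mul_one]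
  exact ⟨V, hV, a, b, hdiag X a fun j => (he j).1, hdiag Y b fun j => (he j).2⟩

theorem diagonal_mem_unitaryGroup_iff {𝕜 : Type*} [RCLike 𝕜] {σ : n → 𝕜} :
    diagonal σ ∈ unitaryGroup n 𝕜 ↔ ∀ j, ‖σ j‖ = 1 := by
  rw [mem_unitaryGroup_iff', star_eq_conjTranspose, diagonal_conjTranspose, diagonal_mul_diagonal,
    ← diagonal_one, diagonal_injective.eq_iff, funext_iff]
  refine forall_congr' fun j => ?_
  rw [Pi.star_apply, RCLike.star_def, RCLike.conj_mul, ← RCLike.ofReal_pow, ← RCLike.ofReal_one,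
    RCLike.ofReal_inj, pow_eq_one_iff_of_nonneg (norm_nonneg _) two_ne_zero]

theorem diagonal_mul_map_ofReal_transpose_mem_unitaryGroup {V : Matrix n n ℝ} {σ : n → ℂ}
    (hV : V ∈ orthogonalGroup n ℝ) (hσ : ∀ j, ‖σ j‖ = 1) :
    diagonal σ * Vᵀ.map ((↑) : ℝ → ℂ) ∈ unitaryGroup n ℂ :=
  mul_mem (diagonal_mem_unitaryGroup_iff.mpr hσ)
    (map_ofReal_mem_unitaryGroup (transpose_mem_unitaryGroup_iff.mpr hV))

theorem commute_map_re_map_im_of_isSymm {S : Matrix n n ℂ} (hS : S.IsSymm)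
    (hN : Commute (star S) S) : Commute (S.map re) (S.map im) := by
  set X := (S.map re).map ((↑) : ℝ → ℂ)
  set Y := (S.map im).map ((↑) : ℝ → ℂ)
  have hstar : X - I • Y = star S := by
    rw [← map_star_eq_map_re_sub_I_smul_map_im, star_eq_conjTranspose, conjTranspose, hS.eq]
  have h : (2 * I) • (X * Y - Y * X) = 0 := by
    rw [← sub_eq_zero.mpr hN.eq, ← hstar, ← map_re_add_I_smul_map_im S]
    simp only [add_mul, mul_add, sub_mul, mul_sub, smul_mul_assoc, mul_smul_comm]
    module
  have hXY : X * Y = Y * X := sub_eq_zero.mp ((smul_eq_zero.mp h).resolve_left (by simp))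
  apply map_injective ofReal_injective
  dsimp only
  rw [map_ofReal_mul, map_ofReal_mul]
  exact hXY

theorem exists_orthogonal_diagonal_of_isSymm {S : Matrix n n ℂ} (hS : S ∈ unitaryGroup n ℂ)
    (hSs : S.IsSymm) : ∃ V ∈ orthogonalGroup n ℝ, ∃ μ : n → ℂ,
      S = V.map ((↑) : ℝ → ℂ) * diagonal μ * Vᵀ.map ((↑) : ℝ → ℂ) := by
  have hN : Commute (star S) S :=
    (mem_unitaryGroup_iff'.mp hS).trans (mem_unitaryGroup_iff.mp hS).symm
  obtain ⟨V, hV, a, b, hX, hY⟩ := IsHermitian.exists_unitary_diagonal_of_commute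
    (isHermitian_iff_isSymm.mpr (hSs.map re)) (isHermitian_iff_isSymm.mpr (hSs.map im))
    (commute_map_re_map_im_of_isSymm hSs hN)
  have hstar : star V = Vᵀ := by rw [star_eq_conjTranspose, conjTranspose_eq_transpose_of_trivial]
  refine ⟨V, hV, fun j => a j + I * b j, ?_⟩
  have hdiag : diagonal (fun j => (a j : ℂ) + I * b j) =
      (diagonal a).map ((↑) : ℝ → ℂ) + I • (diagonal b).map ((↑) : ℝ → ℂ) := by
    rw [diagonal_map ofReal_zero, diagonal_map ofReal_zero, ← diagonal_smul, diagonal_add]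
    rfl
  conv_lhs => rw [← map_re_add_I_smul_map_im S, hX, hY]
  rw [hdiag, hstar]
  simp only [map_ofReal_mul, Matrix.mul_add, Matrix.add_mul, Matrix.mul_smul, Matrix.smul_mul]

theorem exists_transpose_mul_self_eq_of_isSymm {S : Matrix n n ℂ} (hS : S ∈ unitaryGroup n ℂ)
    (hSs : S.IsSymm) : ∃ V ∈ orthogonalGroup n ℝ, ∃ σ : n → ℂ, (∀ j, ‖σ j‖ = 1) ∧
      S = (diagonal σ * Vᵀ.map ((↑) : ℝ → ℂ))ᵀ * (diagonal σ * Vᵀ.map ((↑) : ℝ → ℂ)) := by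
  obtain ⟨V, hV, μ, rfl⟩ := exists_orthogonal_diagonal_of_isSymm hS hSs
  have hVt : Vᵀ.map ((↑) : ℝ → ℂ) * V.map ((↑) : ℝ → ℂ) = 1 := by
    rw [← map_ofReal_mul, (mem_orthogonalGroup_iff' _ _).mp hV, map_ofReal_one]
  have hμ : diagonal μ ∈ unitaryGroup n ℂ := by
    have hVc := map_ofReal_mem_unitaryGroup hV
    have hVtc := map_ofReal_mem_unitaryGroup (transpose_mem_unitaryGroup_iff.mpr hV)
    convert mul_mem (mul_mem hVtc hS) hVc using 1
    simp only [← mul_assoc, hVt, one_mul]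
    rw [mul_assoc, hVt, mul_one]
  choose σ hσ using fun j => IsAlgClosed.exists_pow_nat_eq (μ j) two_pos
  refine ⟨V, hV, σ, fun j => ?_, ?_⟩
  · refine (pow_eq_one_iff_of_nonneg (norm_nonneg _) two_ne_zero).mp ?_
    rw [← norm_pow, hσ, diagonal_mem_unitaryGroup_iff.mp hμ]
  · have hσσ : diagonal μ = diagonal σ * diagonal σ := by
      rw [diagonal_mul_diagonal]
      exact congrArg diagonal (funext fun j => (hσ j) ▸ sq (σ j))
    rw [hσσ, transpose_mul, diagonal_transpose, ← transpose_map, transpose_transpose]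
    simp only [mul_assoc]

theorem exists_orthogonal_map_ofReal_eq {W : Matrix n n ℂ} (hW : W ∈ unitaryGroup n ℂ)
    (hWt : Wᵀ * W = 1) : ∃ O ∈ orthogonalGroup n ℝ, O.map ((↑) : ℝ → ℂ) = W := by
  have hstar : star W = Wᵀ := by
    calc star W = star W * (W * Wᵀ) := by rw [mul_eq_one_comm.mp hWt, mul_one]
      _ = Wᵀ := by rw [← mul_assoc, mem_unitaryGroup_iff'.mp hW, one_mul]
  have hreal : (W.map re).map ((↑) : ℝ → ℂ) = W := by
    ext i j
    exact conj_eq_iff_re.mp (by simpa using congr($hstar j i))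
  refine ⟨W.map re, (mem_orthogonalGroup_iff' _ _).mpr ?_, hreal⟩
  apply map_injective ofReal_injective
  dsimp only
  rw [map_ofReal_mul, transpose_map, hreal, hWt, map_ofReal_one]

theorem transpose_mul_self_map_ofReal_mul {W : Matrix n n ℝ} (hW : W ∈ orthogonalGroup n ℝ)
    (D : Matrix n n ℂ) :
    (W.map ((↑) : ℝ → ℂ) * D)ᵀ * (W.map ((↑) : ℝ → ℂ) * D) = Dᵀ * D := by
  rw [transpose_mul, mul_assoc, ← mul_assoc _ _ D, ← transpose_map, ← map_ofReal_mul,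
    (mem_orthogonalGroup_iff' _ _).mp hW, map_ofReal_one, one_mul]

theorem exists_orthogonal_mul_of_transpose_mul_self_eq {U D : Matrix n n ℂ}
    (hU : U ∈ unitaryGroup n ℂ) (hD : D ∈ unitaryGroup n ℂ) (h : Uᵀ * U = Dᵀ * D) :
    ∃ W ∈ orthogonalGroup n ℝ, U = W.map ((↑) : ℝ → ℂ) * D := by
  have hDD : D * star D = 1 := mem_unitaryGroup_iff.mp hD
  have hWt : (U * star D)ᵀ * (U * star D) = 1 := by
    calc (U * star D)ᵀ * (U * star D) = (star D)ᵀ * (Uᵀ * U) * star D := by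
          rw [transpose_mul]; simp only [mul_assoc]
      _ = (D * star D)ᵀ * (D * star D) := by rw [h, transpose_mul]; simp only [mul_assoc]
      _ = 1 := by rw [hDD, transpose_one, one_mul]
  obtain ⟨W, hW, hWeq⟩ := exists_orthogonal_map_ofReal_eq (mul_mem hU (Unitary.star_mem hD)) hWt
  refine ⟨W, hW, ?_⟩
  rw [hWeq, mul_assoc, mem_unitaryGroup_iff'.mp hD, mul_one]

theorem exists_orthogonal_mul_fromBlocks_iff {U : Matrix (m ⊕ n) (m ⊕ n) ℂ}
    (hU : U ∈ unitaryGroup (m ⊕ n) ℂ) :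
    (∃ (W : Matrix (m ⊕ n) (m ⊕ n) ℝ) (V₁ : Matrix m m ℝ) (V₂ : Matrix n n ℝ)
        (σ₁ : m → ℂ) (σ₂ : n → ℂ),
        W ∈ orthogonalGroup (m ⊕ n) ℝ ∧ V₁ ∈ orthogonalGroup m ℝ ∧ V₂ ∈ orthogonalGroup n ℝ ∧
        (∀ j, ‖σ₁ j‖ = 1) ∧ (∀ j, ‖σ₂ j‖ = 1) ∧
        U = W.map ((↑) : ℝ → ℂ) * fromBlocks (diagonal σ₁ * V₁ᵀ.map ((↑) : ℝ → ℂ)) 0 0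
          (diagonal σ₂ * V₂ᵀ.map ((↑) : ℝ → ℂ))) ↔
      (Uᵀ * U).toBlocks₁₂ = 0 ∧ (Uᵀ * U).toBlocks₂₁ = 0 := by
  constructor
  · rintro ⟨W, V₁, V₂, σ₁, σ₂, hW, -, -, -, -, rfl⟩
    rw [transpose_mul_self_map_ofReal_mul hW, transpose_mul_self_fromBlocks_zero]
    simp
  · rintro ⟨h₁₂, h₂₁⟩
    have hS : Uᵀ * U = fromBlocks (Uᵀ * U).toBlocks₁₁ 0 0 (Uᵀ * U).toBlocks₂₂ := by
      rw [← h₁₂, ← h₂₁, fromBlocks_toBlocks]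
    have hSu : Uᵀ * U ∈ unitaryGroup (m ⊕ n) ℂ :=
      mul_mem (transpose_mem_unitaryGroup_iff.mpr hU) hU
    have hSs : (Uᵀ * U).IsSymm := isSymm_transpose_mul_self U
    rw [hS] at hSu hSs
    obtain ⟨hS₁u, hS₂u⟩ := fromBlocks_zero_mem_unitaryGroup_iff.mp hSu
    obtain ⟨hS₁s, -, -, hS₂s⟩ := isSymm_fromBlocks_iff.mp hSs
    obtain ⟨V₁, hV₁, σ₁, hσ₁, hS₁⟩ := exists_transpose_mul_self_eq_of_isSymm hS₁u hS₁s
    obtain ⟨V₂, hV₂, σ₂, hσ₂, hS₂⟩ := exists_transpose_mul_self_eq_of_isSymm hS₂u hS₂s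
    obtain ⟨W, hW, hUW⟩ := exists_orthogonal_mul_of_transpose_mul_self_eq hU
      (fromBlocks_zero_mem_unitaryGroup_iff.mpr
        ⟨diagonal_mul_map_ofReal_transpose_mem_unitaryGroup hV₁ hσ₁,
          diagonal_mul_map_ofReal_transpose_mem_unitaryGroup hV₂ hσ₂⟩)
      (by rw [transpose_mul_self_fromBlocks_zero, ← hS₁, ← hS₂, ← hS])
    exact ⟨W, V₁, V₂, σ₁, σ₂, hW, hV₁, hV₂, hσ₁, hσ₂, hUW⟩

end Matrix

theorem block_diagonal_characterization_general (d : ℕ)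
    (U : Matrix (Fin d ⊕ Fin d) (Fin d ⊕ Fin d) ℂ)
    (hU : U ∈ Matrix.unitaryGroup (Fin d ⊕ Fin d) ℂ)
    (hB : IsUnit (U.map Complex.im).det) :
    ((∃ P₁ P₂ : Matrix (Fin d) (Fin d) ℝ, P₁ᵀ = P₁ ∧ P₂ᵀ = P₂ ∧
        (U.map Complex.im)⁻¹ * U.map Complex.re = fromBlocks P₁ 0 0 P₂) ↔
      ((Uᵀ * U).toBlocks₁₂ = 0 ∧ (Uᵀ * U).toBlocks₂₁ = 0)) ∧
    ((∃ (W : Matrix (Fin d ⊕ Fin d) (Fin d ⊕ Fin d) ℝ) (V₁ V₂ : Matrix (Fin d) (Fin d) ℝ)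
        (σ₁ σ₂ : Fin d → ℂ),
        W ∈ Matrix.orthogonalGroup (Fin d ⊕ Fin d) ℝ ∧
        V₁ ∈ Matrix.orthogonalGroup (Fin d) ℝ ∧ V₂ ∈ Matrix.orthogonalGroup (Fin d) ℝ ∧
        (∀ j, ‖σ₁ j‖ = 1) ∧ (∀ j, ‖σ₂ j‖ = 1) ∧
        U = W.map (fun x : ℝ => (x : ℂ)) *
          fromBlocks (diagonal σ₁ * (V₁ᵀ).map (fun x : ℝ => (x : ℂ))) 0 0
            (diagonal σ₂ * (V₂ᵀ).map (fun x : ℝ => (x : ℂ)))) ↔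
      ((Uᵀ * U).toBlocks₁₂ = 0 ∧ (Uᵀ * U).toBlocks₂₁ = 0)) :=
  ⟨(exists_isSymm_fromBlocks_iff (imInvMulRe_isSymm hU hB)).trans
      (imInvMulRe_offDiag_eq_zero_iff hU hB),
    exists_orthogonal_mul_fromBlocks_iff hU⟩

/-- For a unitary `U = A + iB ∈ U(2d,ℂ)` with invertible imaginary part `B`
and `P = B⁻¹A`, the following are equivalent: (i) `P` is block-diagonal with symmetric `d×d`
diagonal blocks; (ii) `U = W · diag(Σ₁V₁ᵀ, Σ₂V₂ᵀ)` with `W, V₁, V₂` orthogonal and `Σ₁, Σ₂`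
diagonal unitary; (iii) `UᵀU` is block-diagonal. -/
theorem block_diagonal_characterization (d : ℕ) (hd : 1 ≤ d)
    (U : Matrix (Fin d ⊕ Fin d) (Fin d ⊕ Fin d) ℂ)
    (hU : U ∈ Matrix.unitaryGroup (Fin d ⊕ Fin d) ℂ)
    (hB : IsUnit (U.map Complex.im).det) :
    ((∃ P₁ P₂ : Matrix (Fin d) (Fin d) ℝ, P₁ᵀ = P₁ ∧ P₂ᵀ = P₂ ∧
        (U.map Complex.im)⁻¹ * U.map Complex.re = fromBlocks P₁ 0 0 P₂) ↔
      ((Uᵀ * U).toBlocks₁₂ = 0 ∧ (Uᵀ * U).toBlocks₂₁ = 0)) ∧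
    ((∃ (W : Matrix (Fin d ⊕ Fin d) (Fin d ⊕ Fin d) ℝ) (V₁ V₂ : Matrix (Fin d) (Fin d) ℝ)
        (σ₁ σ₂ : Fin d → ℂ),
        W ∈ Matrix.orthogonalGroup (Fin d ⊕ Fin d) ℝ ∧
        V₁ ∈ Matrix.orthogonalGroup (Fin d) ℝ ∧ V₂ ∈ Matrix.orthogonalGroup (Fin d) ℝ ∧
        (∀ j, ‖σ₁ j‖ = 1) ∧ (∀ j, ‖σ₂ j‖ = 1) ∧
        U = W.map (fun x : ℝ => (x : ℂ)) *
          fromBlocks (diagonal σ₁ * (V₁ᵀ).map (fun x : ℝ => (x : ℂ))) 0 0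
            (diagonal σ₂ * (V₂ᵀ).map (fun x : ℝ => (x : ℂ)))) ↔
      ((Uᵀ * U).toBlocks₁₂ = 0 ∧ (Uᵀ * U).toBlocks₂₁ = 0)) :=
  block_diagonal_characterization_general d U hU hB
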